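/- arXiv:2208.05658 — 3 statements merged into one kernel-verified Lean document; each statement's English description precedes it below -/
import Mathlib

section
/- Let A be a unital C*-algebra and τ : A → ℬ a function into a C*-algebra ℬ which satisfies τ(x*x) = τ(xx*) ≥ 0 for all x in M₂(A) (extended to M₂(A) as in the definition of a 2-quasitrace), is additive on commuting positive elements, and is monotone on positives (a ≤ b implies τ(a) ≤ τ(b)). Then for all positive a, b ∈ A one has τ(a + b) ≤ 2(τ(a) + τ(b)). -/
set_option maxHeartbeats 1000000 in
open Matrix in
/-- A 2-quasitrace-type function `τ : A → B` (extending to `τ₂` on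
`M₂(A)` with the trace, positivity, additivity-on-commuting and monotonicity
properties) satisfies `τ(a+b) ≤ 2(τ(a)+τ(b))` for positive `a b ∈ A`. -/
theorem stmt9 {A B : Type*} [CStarAlgebra A] [PartialOrder A] [StarOrderedRing A]
    [NonUnitalCStarAlgebra B] [PartialOrder B] [StarOrderedRing B]
    (τ : A → B) (τ₂ : Matrix (Fin 2) (Fin 2) A → B)
    (hlink : ∀ c : A, τ c = τ₂ (single 0 0 c))
    (htrace : ∀ x : Matrix (Fin 2) (Fin 2) A, τ₂ (star x * x) = τ₂ (x * star x))
    (hpos : ∀ x : Matrix (Fin 2) (Fin 2) A, 0 ≤ τ₂ (star x * x))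
    (hmono : ∀ p q : Matrix (Fin 2) (Fin 2) A,
      (∃ N, p = star N * N) → (∃ N, q - p = star N * N) → τ₂ p ≤ τ₂ q)
    (hadd : ∀ p q : Matrix (Fin 2) (Fin 2) A, p * q = q * p →
      (∃ N, p = star N * N) → (∃ N, q = star N * N) → τ₂ (p + q) = τ₂ p + τ₂ q) :
    ∀ a b : A, 0 ≤ a → 0 ≤ b → τ (a + b) ≤ 2 • (τ a + τ b) := by
  intro a b ha hb
  set c := CFC.sqrt a with hcdef
  set d := CFC.sqrt b with hddef
  have hc : c * c = a := CFC.sqrt_mul_sqrt_self a ha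
  have hd : d * d = b := CFC.sqrt_mul_sqrt_self b hb
  have hcs : star c = c := (IsSelfAdjoint.of_nonneg (CFC.sqrt_nonneg (a := a))).star_eq
  have hds : star d = d := (IsSelfAdjoint.of_nonneg (CFC.sqrt_nonneg (a := b))).star_eq
  -- the matrices from the proof
  set x : Matrix (Fin 2) (Fin 2) A := !![c, 0; d, 0] with hxdef
  set z : Matrix (Fin 2) (Fin 2) A := !![c, 0; -d, 0] with hzdef
  set y : Matrix (Fin 2) (Fin 2) A :=
    single 0 0 (a + a) + single 1 1 (b + b) with hydef
  have hxx : star x * x = single 0 0 (a + b) := by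
    ext i j
    fin_cases i <;> fin_cases j <;>
      simp [hxdef, Matrix.mul_apply, Fin.sum_univ_two, Matrix.star_apply,
        Matrix.single, hcs, hds, hc, hd]
  have hxxs : x * star x = !![a, c * d; d * c, b] := by
    ext i j
    fin_cases i <;> fin_cases j <;>
      simp [hxdef, Matrix.mul_apply, Fin.sum_univ_two, Matrix.star_apply,
        hcs, hds, hc, hd]
  have hzz : star (star z) * star z = y - x * star x := by
    ext i j
    fin_cases i <;> fin_cases j <;>
      simp [hzdef, hxxs, hydef, Matrix.mul_apply, Fin.sum_univ_two, Matrix.star_apply,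
        Matrix.single, hcs, hds, hc, hd, two_mul]
  -- step 1: τ(a+b) = τ₂(x*x) = τ₂(xx*)
  have step1 : τ (a + b) = τ₂ (x * star x) := by
    rw [hlink, ← hxx, htrace]
  -- step 2: τ₂(xx*) ≤ τ₂ y
  have step2 : τ₂ (x * star x) ≤ τ₂ y := by
    refine hmono _ _ ⟨star x, by rw [star_star]⟩ ⟨star z, hzz.symm⟩
  -- auxiliary products
  have hmul00 : ∀ u v : A, single (0 : Fin 2) (0 : Fin 2) u * single 0 0 v
      = single 0 0 (u * v) := by
    intro u v
    ext i j
    fin_cases i <;> fin_cases j <;>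
      simp [Matrix.mul_apply, Fin.sum_univ_two, Matrix.single]
  have hsq00 : ∀ u : A, 0 ≤ u → (∃ N, single (0 : Fin 2) (0 : Fin 2) u = star N * N) := by
    intro u hu
    refine ⟨single 0 0 (CFC.sqrt u), ?_⟩
    have h1 : star (single (0 : Fin 2) (0 : Fin 2) (CFC.sqrt u))
        = single 0 0 (CFC.sqrt u) := by
      ext i j
      fin_cases i <;> fin_cases j <;>
        simp [Matrix.star_apply, Matrix.single,
          (IsSelfAdjoint.of_nonneg (CFC.sqrt_nonneg (a := u))).star_eq]
    rw [h1, hmul00, CFC.sqrt_mul_sqrt_self u hu]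
  have hsq11 : ∀ u : A, 0 ≤ u → (∃ N, single (1 : Fin 2) (1 : Fin 2) u = star N * N) := by
    intro u hu
    refine ⟨single 0 1 (CFC.sqrt u), ?_⟩
    have hs := (IsSelfAdjoint.of_nonneg (CFC.sqrt_nonneg (a := u))).star_eq
    ext i j
    fin_cases i <;> fin_cases j <;>
      simp [Matrix.mul_apply, Fin.sum_univ_two, Matrix.star_apply,
        Matrix.single, hs, CFC.sqrt_mul_sqrt_self u hu]
  -- τ₂ on sb 1 1 u equals τ₂ on sb 0 0 u for 0 ≤ u, via the trace property
  have hswap : ∀ u : A, 0 ≤ u →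
      τ₂ (single (1 : Fin 2) (1 : Fin 2) u) = τ₂ (single (0 : Fin 2) (0 : Fin 2) u) := by
    intro u hu
    have hs := (IsSelfAdjoint.of_nonneg (CFC.sqrt_nonneg (a := u))).star_eq
    have h1 : star (single (0 : Fin 2) (1 : Fin 2) (CFC.sqrt u))
        * single 0 1 (CFC.sqrt u) = single 1 1 u := by
      ext i j
      fin_cases i <;> fin_cases j <;>
        simp [Matrix.mul_apply, Fin.sum_univ_two, Matrix.star_apply,
          Matrix.single, hs, CFC.sqrt_mul_sqrt_self u hu]
    have h2 : single (0 : Fin 2) (1 : Fin 2) (CFC.sqrt u)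
        * star (single 0 1 (CFC.sqrt u)) = single 0 0 u := by
      ext i j
      fin_cases i <;> fin_cases j <;>
        simp [Matrix.mul_apply, Fin.sum_univ_two, Matrix.star_apply,
          Matrix.single, hs, CFC.sqrt_mul_sqrt_self u hu]
    rw [← h1, htrace, h2]
  -- step 3: τ₂ y = (τ a + τ a) + (τ b + τ b)
  have hP : τ₂ (single (0 : Fin 2) (0 : Fin 2) (a + a)) = τ a + τ a := by
    have : single (0 : Fin 2) (0 : Fin 2) (a + a)
        = single 0 0 a + single 0 0 a := by
      ext i j; simp [Matrix.single]; split <;> simp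
    rw [this, hadd _ _ rfl (hsq00 a ha) (hsq00 a ha), hlink]
  have hQ : τ₂ (single (1 : Fin 2) (1 : Fin 2) (b + b)) = τ b + τ b := by
    have : single (1 : Fin 2) (1 : Fin 2) (b + b)
        = single 1 1 b + single 1 1 b := by
      ext i j; simp [Matrix.single]; split <;> simp
    rw [this, hadd _ _ rfl (hsq11 b hb) (hsq11 b hb), hswap b hb, hlink]
  have hcomm : single (0 : Fin 2) (0 : Fin 2) (a + a) * single 1 1 (b + b)
      = single 1 1 (b + b) * single 0 0 (a + a) := by
    have h01 : (0 : Fin 2) ≠ 1 := by decide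
    rw [Matrix.single_mul_single_of_ne (i := 0) (j := 0) (k := 1) (h := h01) (d := b + b),
      Matrix.single_mul_single_of_ne (i := 1) (j := 1) (k := 0) (h := h01.symm) (d := a + a)]
  have step3 : τ₂ y = (τ a + τ a) + (τ b + τ b) := by
    rw [hydef, hadd _ _ hcomm (hsq00 _ (add_nonneg ha ha)) (hsq11 _ (add_nonneg hb hb)),
      hP, hQ]
  calc τ (a + b) = τ₂ (x * star x) := step1
    _ ≤ τ₂ y := step2
    _ = (τ a + τ a) + (τ b + τ b) := step3
    _ = 2 • (τ a + τ b) := by rw [two_smul]; abel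
end

section
/- Let A be a C*-algebra, a, b ∈ A positive elements, and for n ≥ 1 let f_{1/n} : ℝ → [0,1] be the continuous function which is 0 on (−∞, 1/(2n)], 1 on [1/n, ∞), and linear in between. Set aₙ = f_{1/n}(a a*) = f_{1/n}(a²), aₙ' = f_{1/n}(a*a), bₙ = f_{1/n}(b²), bₙ' = f_{1/n}(b*b). Then in M₂(A), (aₙ ⊗ e₁₁ + bₙ ⊗ e₁₂)(a ⊗ e₁₁ + b ⊗ e₂₂)(aₙ' ⊗ e₁₁ + bₙ' ⊗ e₂₁) converges in norm to (a+b) ⊗ e₁₁ as n → ∞. In particular (a+b) ⊕ 0 is Cuntz subequivalent to a ⊕ b in M₂(A). -/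
open Matrix Filter

private lemma star_stdBasisMatrix' {A : Type*} [AddMonoid A] [StarAddMonoid A]
    (i j : Fin 2) (x : A) :
    star (single i j x) = single j i (star x) := by
  ext i' j'
  simp only [Matrix.star_eq_conjTranspose, conjTranspose_apply, single, of_apply]
  by_cases h1 : i = j' <;> by_cases h2 : j = i' <;> simp [h1, h2, and_comm]

private lemma tendsto_stdBasisMatrix_comp' {A : Type*} [NormedRing A] {c : ℕ → A} {L : A}
    (i j : Fin 2) (h : Tendsto c atTop (nhds L)) :
    Tendsto (fun n => single i j (c n)) atTop (nhds (single i j L)) := by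
  have hcont : Continuous (fun x : A => (single i j x : Matrix (Fin 2) (Fin 2) A)) := by
    apply continuous_matrix
    intro i' j'
    simp only [single, of_apply]
    split_ifs
    · exact continuous_id
    · exact continuous_const
  exact (hcont.tendsto L).comp h

private lemma key_scalar' {A : Type*} [CStarAlgebra A] [PartialOrder A] [StarOrderedRing A]
    (a : A) (ha : 0 ≤ a)
    (f : ℕ → ℝ → ℝ) (hf : ∀ (n : ℕ) (t : ℝ), f n t = min 1 (max 0 (2 * n * t - 1))) :
    Tendsto (fun n => cfc (f n) (a * a) * a * cfc (f n) (a * a)) atTop (nhds a) := by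
  have hsa : IsSelfAdjoint a := .of_nonneg ha
  have hcont : ∀ n, Continuous (f n) := by
    intro n
    have : f n = fun t : ℝ => min 1 (max 0 (2 * (n:ℝ) * t - 1)) := funext (hf n)
    rw [this]; fun_prop
  have key : ∀ n, cfc (f n) (a * a) * a * cfc (f n) (a * a)
      = cfc (fun t : ℝ => f n (t ^ 2) * t * f n (t ^ 2)) a := by
    intro n
    have h1 : cfc (f n) (a * a) = cfc (fun t : ℝ => f n (t ^ 2)) a := by
      rw [← sq, ← cfc_comp_pow (f n) 2 a]
    rw [h1, cfc_mul _ _ a, cfc_mul _ _ a, cfc_id' ℝ a]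
  have hbound : ∀ n : ℕ, 1 ≤ n → ∀ x ∈ spectrum ℝ a,
      ‖f n (x ^ 2) * x * f n (x ^ 2) - x‖ ≤ (Real.sqrt n)⁻¹ := by
    intro n hn x hx
    have hx0 : 0 ≤ x := spectrum_nonneg_of_nonneg ha hx
    have hn0 : (0:ℝ) < n := by exact_mod_cast hn
    have hsq : (0:ℝ) < Real.sqrt n := Real.sqrt_pos.mpr hn0
    rw [hf]
    set s : ℝ := min 1 (max 0 (2 * (n:ℝ) * x ^ 2 - 1)) with hs
    have hs0 : 0 ≤ s := le_min one_pos.le (le_max_left _ _) |>.trans_eq rfl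
    have hs1 : s ≤ 1 := min_le_left _ _
    by_cases hc : (1:ℝ) ≤ (n:ℝ) * x ^ 2
    · have : s = 1 := by
        rw [hs, min_eq_left]
        rw [le_max_iff]; right; linarith
      rw [this]
      simp [hsq.le, inv_nonneg]
    · push_neg at hc
      have hxle : x ≤ (Real.sqrt n)⁻¹ := by
        have hx2 : x ^ 2 ≤ (n:ℝ)⁻¹ := by
          rw [← one_div, le_div_iff₀ hn0]; nlinarith
        rw [← Real.sqrt_inv]
        calc x = Real.sqrt (x ^ 2) := (Real.sqrt_sq hx0).symm
          _ ≤ Real.sqrt (n:ℝ)⁻¹ := Real.sqrt_le_sqrt hx2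
      have h1 : s * x * s - x = x * (s * s - 1) := by ring
      rw [h1, norm_mul]
      have : ‖s * s - 1‖ ≤ 1 := by
        rw [Real.norm_eq_abs, abs_le]
        constructor <;> nlinarith
      calc ‖x‖ * ‖s * s - 1‖ ≤ ‖x‖ * 1 := by
            exact mul_le_mul_of_nonneg_left this (norm_nonneg _)
        _ = x := by rw [mul_one, Real.norm_of_nonneg hx0]
        _ ≤ (Real.sqrt n)⁻¹ := hxle
  rw [tendsto_iff_norm_sub_tendsto_zero]
  have hc2 : ∀ n, Continuous fun t : ℝ => f n (t ^ 2) :=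
    fun n => (hcont n).comp (continuous_pow 2)
  apply squeeze_zero' (g := fun n : ℕ => (Real.sqrt n)⁻¹)
    (Eventually.of_forall fun n => norm_nonneg _)
  · filter_upwards [eventually_ge_atTop 1] with n hn
    rw [key n]
    have hdiff : cfc (fun t : ℝ => f n (t ^ 2) * t * f n (t ^ 2)) a - a
        = cfc (fun t : ℝ => f n (t ^ 2) * t * f n (t ^ 2) - t) a := by
      exact ((cfc_sub (fun t : ℝ => f n (t ^ 2) * t * f n (t ^ 2)) (fun t : ℝ => t) a
        ((((hc2 n).mul continuous_id).mul (hc2 n)).continuousOn)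
        continuous_id.continuousOn).trans (by rw [cfc_id' ℝ a])).symm
    rw [hdiff]
    exact norm_cfc_le (by positivity) (hbound n hn)
  · apply Filter.Tendsto.inv_tendsto_atTop
    have h1 : Tendsto Real.sqrt atTop atTop :=
      (tendsto_rpow_atTop (by norm_num : (0:ℝ) < 1/2)).congr
        (fun x => (Real.sqrt_eq_rpow x).symm)
    exact h1.comp tendsto_natCast_atTop_atTop

open Matrix Filter in
/-- For positive `a b` in a unital C*-algebra, with
`f_{1/n}(t) = min 1 (max 0 (2nt − 1))` applied by continuous functional calculus,
the products `(f(aa*)⊗e₁₁ + f(b²)⊗e₁₂)(a⊗e₁₁ + b⊗e₂₂)(f(a*a)⊗e₁₁ + f(b*b)⊗e₂₁)`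
converge in `M₂(A)` to `(a+b)⊗e₁₁`; in particular `(a+b)⊕0` is Cuntz
subequivalent to `a⊕b`. -/
theorem stmt11 {A : Type*} [CStarAlgebra A] [PartialOrder A] [StarOrderedRing A]
    (a b : A) (ha : 0 ≤ a) (hb : 0 ≤ b)
    (f : ℕ → ℝ → ℝ) (hf : ∀ (n : ℕ) (t : ℝ), f n t = min 1 (max 0 (2 * n * t - 1))) :
    Tendsto (fun n : ℕ =>
        (single (0 : Fin 2) (0 : Fin 2) (cfc (f n) (a * star a)) +
            single 0 1 (cfc (f n) (b * b))) *
          (single (0 : Fin 2) (0 : Fin 2) a + single 1 1 b) *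
          (single (0 : Fin 2) (0 : Fin 2) (cfc (f n) (star a * a)) +
            single 1 0 (cfc (f n) (star b * b))))
      atTop (nhds (single (0 : Fin 2) (0 : Fin 2) (a + b))) ∧
    ∃ u : ℕ → Matrix (Fin 2) (Fin 2) A,
      Tendsto (fun n =>
          u n * (single (0 : Fin 2) (0 : Fin 2) a + single 1 1 b) * star (u n))
        atTop (nhds (single (0 : Fin 2) (0 : Fin 2) (a + b))) := by
  have hsa : IsSelfAdjoint a := .of_nonneg ha
  have hsb : IsSelfAdjoint b := .of_nonneg hb
  have hprod : ∀ n : ℕ,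
      (single (0 : Fin 2) (0 : Fin 2) (cfc (f n) (a * star a)) +
            single 0 1 (cfc (f n) (b * b))) *
          (single (0 : Fin 2) (0 : Fin 2) a + single 1 1 b) *
          (single (0 : Fin 2) (0 : Fin 2) (cfc (f n) (star a * a)) +
            single 1 0 (cfc (f n) (star b * b)))
        = single (0 : Fin 2) (0 : Fin 2)
            (cfc (f n) (a * a) * a * cfc (f n) (a * a) +
              cfc (f n) (b * b) * b * cfc (f n) (b * b)) := by
    intro n
    rw [hsa.star_eq, hsb.star_eq, single_add]
    simp only [add_mul, mul_add, single_mul_single_same, single_mul_single_of_ne,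
      ne_eq, zero_ne_one, one_ne_zero, not_false_iff,
      add_zero, zero_add, zero_mul, mul_zero]
  have h1 : Tendsto (fun n : ℕ =>
        (single (0 : Fin 2) (0 : Fin 2) (cfc (f n) (a * star a)) +
            single 0 1 (cfc (f n) (b * b))) *
          (single (0 : Fin 2) (0 : Fin 2) a + single 1 1 b) *
          (single (0 : Fin 2) (0 : Fin 2) (cfc (f n) (star a * a)) +
            single 1 0 (cfc (f n) (star b * b))))
      atTop (nhds (single (0 : Fin 2) (0 : Fin 2) (a + b))) := by
    simp only [hprod]
    exact tendsto_stdBasisMatrix_comp' 0 0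
      ((key_scalar' a ha f hf).add (key_scalar' b hb f hf))
  refine ⟨h1, ⟨fun n => single (0 : Fin 2) (0 : Fin 2) (cfc (f n) (a * star a)) +
      single 0 1 (cfc (f n) (b * b)), ?_⟩⟩
  have hstar : ∀ n : ℕ,
      star (single (0 : Fin 2) (0 : Fin 2) (cfc (f n) (a * star a)) +
        single 0 1 (cfc (f n) (b * b)))
      = single (0 : Fin 2) (0 : Fin 2) (cfc (f n) (star a * a)) +
          single 1 0 (cfc (f n) (star b * b)) := by
    intro n
    rw [star_add, star_stdBasisMatrix', star_stdBasisMatrix',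
      IsSelfAdjoint.cfc.star_eq, IsSelfAdjoint.cfc.star_eq, hsa.star_eq, hsb.star_eq]
  have heq : (fun n : ℕ =>
      (single (0 : Fin 2) (0 : Fin 2) (cfc (f n) (a * star a)) +
        single 0 1 (cfc (f n) (b * b))) *
        (single (0 : Fin 2) (0 : Fin 2) a + single 1 1 b) *
        star (single (0 : Fin 2) (0 : Fin 2) (cfc (f n) (a * star a)) +
          single 0 1 (cfc (f n) (b * b))))
      = fun n : ℕ =>
        (single (0 : Fin 2) (0 : Fin 2) (cfc (f n) (a * star a)) +
            single 0 1 (cfc (f n) (b * b))) *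
          (single (0 : Fin 2) (0 : Fin 2) a + single 1 1 b) *
          (single (0 : Fin 2) (0 : Fin 2) (cfc (f n) (star a * a)) +
            single 1 0 (cfc (f n) (star b * b))) := by
    funext n; rw [hstar n]
  rw [heq]
  exact h1
end

section
/- Let A, B be C*-algebras and ψ : A → B a contractive completely positive map. Then for all a, b ∈ A: ‖ψ(ab) − ψ(a)ψ(b)‖ ≤ ‖ψ(aa*) − ψ(a)ψ(a*)‖^{1/2} · ‖b‖. -/
set_option maxHeartbeats 1000000

private lemma csmul_nonneg {B : Type*} [CStarAlgebra B] [PartialOrder B] [StarOrderedRing B]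
    {r : ℝ} (hr : 0 ≤ r) {w : B} (hw : 0 ≤ w) : 0 ≤ ((r : ℂ)) • w := by
  have hs : CFC.sqrt w * CFC.sqrt w = w := CFC.sqrt_mul_sqrt_self w hw
  have hsa : IsSelfAdjoint (CFC.sqrt w) := IsSelfAdjoint.of_nonneg (CFC.sqrt_nonneg w)
  have : ((r : ℂ)) • w = star (((Real.sqrt r : ℝ) : ℂ) • CFC.sqrt w) *
      (((Real.sqrt r : ℝ) : ℂ) • CFC.sqrt w) := by
    rw [star_smul, hsa.star_eq, smul_mul_assoc, mul_smul_comm, smul_smul, hs]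
    congr 1
    simp [← Complex.ofReal_mul, Real.mul_self_sqrt hr]
  rw [this]
  exact star_mul_self_nonneg _

open Finset in
private lemma cs_aux {B : Type*} [CStarAlgebra B] [PartialOrder B] [StarOrderedRing B]
    {ι : Type*} [Fintype ι] (x y : ι → B) :
    ‖∑ k, star (x k) * y k‖ ≤
      Real.sqrt ‖∑ k, star (x k) * x k‖ * Real.sqrt ‖∑ k, star (y k) * y k‖ := by
  set z := ∑ k, star (x k) * y k with hzdef
  set p := ∑ k, star (x k) * x k with hpdef
  set q := ∑ k, star (y k) * y k with hqdef
  have hzstar : star z = ∑ k, star (y k) * x k := by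
    simp [hzdef, star_sum, star_mul]
  have key : ∀ t : ℝ, 0 ≤ t → 2 * t * ‖z‖ ^ 2 ≤ ‖p‖ * ‖z‖ ^ 2 + t ^ 2 * ‖q‖ := by
    intro t ht
    have hnn : (0:B) ≤ ∑ k, star (x k * z - (t:ℂ) • y k) * (x k * z - (t:ℂ) • y k) :=
      Finset.sum_nonneg fun k _ => star_mul_self_nonneg _
    have hexp : ∑ k, star (x k * z - (t:ℂ) • y k) * (x k * z - (t:ℂ) • y k)
        = star z * p * z - ((2*t : ℝ) : ℂ) • (star z * z) + ((t^2 : ℝ) : ℂ) • q := by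
      have e1 : ∀ k, star (x k * z - (t:ℂ) • y k) * (x k * z - (t:ℂ) • y k)
          = star z * (star (x k) * x k) * z - (t:ℂ) • (star z * (star (x k) * y k))
            - (t:ℂ) • (star (y k) * x k * z) + ((t^2 : ℝ) : ℂ) • (star (y k) * y k) := by
        intro k
        have hconj : (starRingEnd ℂ) (t:ℂ) = (t:ℂ) := by simp
        simp only [star_sub, star_mul, star_smul, hconj, sub_mul, mul_sub,
          smul_mul_assoc, mul_smul_comm, star_star, Complex.star_def,
          Complex.conj_ofReal, smul_sub, smul_smul, mul_assoc]
        push_cast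
        module
      calc ∑ k, star (x k * z - (t:ℂ) • y k) * (x k * z - (t:ℂ) • y k)
          = ∑ k, (star z * (star (x k) * x k) * z - (t:ℂ) • (star z * (star (x k) * y k))
            - (t:ℂ) • (star (y k) * x k * z) + ((t^2 : ℝ) : ℂ) • (star (y k) * y k)) := by
            exact Finset.sum_congr rfl fun k _ => e1 k
        _ = star z * p * z - ((2*t : ℝ) : ℂ) • (star z * z) + ((t^2 : ℝ) : ℂ) • q := by
            simp only [Finset.sum_add_distrib, Finset.sum_sub_distrib, ← Finset.smul_sum,
              ← Finset.mul_sum, ← Finset.sum_mul, hpdef, hqdef, ← hzdef, ← hzstar]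
            push_cast
            rw [two_mul, add_smul]
            abel
    -- rearrange
    have h1 : ((2*t : ℝ) : ℂ) • (star z * z) ≤ star z * p * z + ((t^2 : ℝ) : ℂ) • q := by
      have := hnn
      rw [hexp] at this
      calc ((2*t : ℝ) : ℂ) • (star z * z)
          ≤ ((2*t : ℝ) : ℂ) • (star z * z) +
            (star z * p * z - ((2*t : ℝ) : ℂ) • (star z * z) + ((t^2 : ℝ) : ℂ) • q) :=
            le_add_of_nonneg_right this
        _ = star z * p * z + ((t^2 : ℝ) : ℂ) • q := by abel
    have hpsa : IsSelfAdjoint p := by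
      refine IsSelfAdjoint.of_nonneg ?_
      exact Finset.sum_nonneg fun k _ => star_mul_self_nonneg _
    have h2 : star z * p * z ≤ ((‖p‖ : ℝ) : ℂ) • (star z * z) := by
      have hle : p ≤ algebraMap ℝ B ‖p‖ := IsSelfAdjoint.le_algebraMap_norm_self hpsa
      have := star_left_conjugate_le_conjugate hle z
      calc star z * p * z ≤ star z * algebraMap ℝ B ‖p‖ * z := this
        _ = ((‖p‖ : ℝ) : ℂ) • (star z * z) := by
            rw [IsScalarTower.algebraMap_apply ℝ ℂ B, Algebra.algebraMap_eq_smul_one,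
              mul_smul_comm, smul_mul_assoc, mul_one]
            simp
    have h3 : ((2*t : ℝ) : ℂ) • (star z * z) ≤
        ((‖p‖ : ℝ) : ℂ) • (star z * z) + ((t^2 : ℝ) : ℂ) • q := by
      calc ((2*t : ℝ) : ℂ) • (star z * z) ≤ star z * p * z + ((t^2 : ℝ) : ℂ) • q := h1
        _ ≤ ((‖p‖ : ℝ) : ℂ) • (star z * z) + ((t^2 : ℝ) : ℂ) • q := by
            exact add_le_add h2 le_rfl
    have hzznn : (0:B) ≤ star z * z := star_mul_self_nonneg z
    have hlhsnn : (0:B) ≤ ((2*t : ℝ) : ℂ) • (star z * z) :=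
      csmul_nonneg (by linarith) hzznn
    have hnorm := CStarAlgebra.norm_le_norm_of_nonneg_of_le hlhsnn h3
    have hzz : ‖star z * z‖ = ‖z‖ ^ 2 := by
      rw [CStarRing.norm_star_mul_self, pow_two]
    have hqnn : (0:B) ≤ q := Finset.sum_nonneg fun k _ => star_mul_self_nonneg _
    have hL : ‖((2*t : ℝ) : ℂ) • (star z * z)‖ = 2 * t * ‖z‖ ^ 2 := by
      rw [norm_smul, hzz, Complex.norm_real, Real.norm_of_nonneg (by linarith)]
    have hR : ‖((‖p‖ : ℝ) : ℂ) • (star z * z) + ((t^2 : ℝ) : ℂ) • q‖ ≤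
        ‖p‖ * ‖z‖ ^ 2 + t ^ 2 * ‖q‖ := by
      refine (norm_add_le _ _).trans ?_
      rw [norm_smul, norm_smul, hzz, Complex.norm_real, Complex.norm_real,
        Real.norm_of_nonneg (norm_nonneg p), Real.norm_of_nonneg (sq_nonneg t)]
    rw [hL] at hnorm
    linarith [hnorm.trans hR]
  -- scalar conclusion
  set s := ‖z‖ ^ 2 with hs
  have hsnn : 0 ≤ s := sq_nonneg _
  have hPnn : 0 ≤ ‖p‖ := norm_nonneg _
  have hQnn : 0 ≤ ‖q‖ := norm_nonneg _
  have hmain : s ≤ ‖p‖ * ‖q‖ := by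
    rcases eq_or_lt_of_le hsnn with h0 | hspos
    · rw [← h0]; positivity
    rcases eq_or_lt_of_le hQnn with hQ0 | hQpos
    · have h := key (‖p‖ + 1) (by linarith)
      rw [← hQ0] at h
      nlinarith
    · have h := key (s / ‖q‖) (by positivity)
      have hq' : ‖q‖ ≠ 0 := ne_of_gt hQpos
      have e : 2*(s/‖q‖)*s - (s/‖q‖)^2*‖q‖ = s^2/‖q‖ := by
        field_simp
        ring
      have h2 : s^2/‖q‖ ≤ ‖p‖*s := by linarith
      have h3 : s^2 ≤ ‖p‖*s*‖q‖ := (div_le_iff₀ hQpos).mp h2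
      nlinarith [hspos]
  have : ‖z‖ = Real.sqrt s := by rw [hs, Real.sqrt_sq (norm_nonneg z)]
  rw [this]
  calc Real.sqrt s ≤ Real.sqrt (‖p‖ * ‖q‖) := Real.sqrt_le_sqrt hmain
    _ = Real.sqrt ‖p‖ * Real.sqrt ‖q‖ := Real.sqrt_mul hPnn _

open Finset in
private lemma expand_aux {B : Type*} [Ring B] [StarRing B] {n : ℕ}
    (u c d : Fin n → B) (w1 w2 : B) :
    ∑ k, star (c k - u k * w1) * (d k - u k * w2)
      = (∑ k, star (c k) * d k) - (∑ k, star (c k) * u k) * w2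
        - star w1 * (∑ k, star (u k) * d k) + star w1 * (∑ k, star (u k) * u k) * w2 := by
  have e : ∀ k, star (c k - u k * w1) * (d k - u k * w2)
      = star (c k) * d k - (star (c k) * u k) * w2 - star w1 * (star (u k) * d k)
        + star w1 * ((star (u k) * u k) * w2) := by
    intro k
    simp only [star_sub, star_mul]
    noncomm_ring
  rw [Finset.sum_congr rfl fun k _ => e k]
  simp only [Finset.sum_add_distrib, Finset.sum_sub_distrib, ← Finset.sum_mul, ← Finset.mul_sum]
  noncomm_ring

/-- For a contractive completely positive map `ψ : A → B` between
C*-algebras, `‖ψ(ab) − ψ(a)ψ(b)‖ ≤ ‖ψ(aa*) − ψ(a)ψ(a*)‖^{1/2}·‖b‖`. -/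
theorem stmt12 {A B : Type*} [CStarAlgebra A] [CStarAlgebra B]
    (ψ : A →L[ℂ] B) (hψ : ‖ψ‖ ≤ 1)
    (hcp : ∀ (n : ℕ) (M : Matrix (Fin n) (Fin n) A),
      (∃ N : Matrix (Fin n) (Fin n) A, M = star N * N) →
      ∃ N' : Matrix (Fin n) (Fin n) B, M.map (fun x => ψ x) = star N' * N') :
    ∀ a b : A, ‖ψ (a * b) - ψ a * ψ b‖ ≤
      Real.sqrt ‖ψ (a * star a) - ψ a * ψ (star a)‖ * ‖b‖ := by
  intro a b
  letI : PartialOrder B := CStarAlgebra.spectralOrder B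
  haveI : StarOrderedRing B := CStarAlgebra.spectralOrderedRing B
  obtain ⟨v, hv0, hv1, hv2⟩ : ∃ v : Fin 3 → A, v 0 = 1 ∧ v 1 = star a ∧ v 2 = b :=
    ⟨![1, star a, b], rfl, rfl, rfl⟩
  obtain ⟨N', hN'⟩ := hcp 3 (star (Matrix.of fun i j => if i = 0 then v j else 0) *
      (Matrix.of fun i j => if i = 0 then v j else 0))
      ⟨(Matrix.of fun i j => if i = 0 then v j else 0), rfl⟩
  have hentry : ∀ i j, ψ (star (v i) * v j) = ∑ k, star (N' k i) * N' k j := by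
    intro i j
    have h2 := congrFun (congrFun hN' i) j
    rw [Matrix.map_apply, Matrix.mul_apply, Matrix.mul_apply] at h2
    have h1 : ∑ k, (star (Matrix.of fun i j => if i = 0 then v j else 0)) i k *
        (Matrix.of fun i j => if i = 0 then v j else 0) k j = star (v i) * v j := by
      rw [Fin.sum_univ_three]
      simp only [Matrix.star_apply, Matrix.of_apply, if_pos rfl,
        if_neg (show (1:Fin 3) ≠ 0 by decide), if_neg (show (2:Fin 3) ≠ 0 by decide)]
      simp
    rw [h1] at h2
    rw [h2]
    rfl
  set u : Fin 3 → B := fun k => N' k 0 with hu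
  set c : Fin 3 → B := fun k => N' k 1 with hc
  set d : Fin 3 → B := fun k => N' k 2 with hd
  have h00 : ψ 1 = ∑ k, star (u k) * u k := by simpa [hv0] using hentry 0 0
  have h01 : ψ (star a) = ∑ k, star (u k) * c k := by simpa [hv0, hv1] using hentry 0 1
  have h10 : ψ a = ∑ k, star (c k) * u k := by simpa [hv0, hv1] using hentry 1 0
  have h02 : ψ b = ∑ k, star (u k) * d k := by simpa [hv0, hv2] using hentry 0 2
  have h20 : ψ (star b) = ∑ k, star (d k) * u k := by simpa [hv0, hv2] using hentry 2 0
  have h11 : ψ (a * star a) = ∑ k, star (c k) * c k := by simpa [hv1] using hentry 1 1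
  have h12 : ψ (a * b) = ∑ k, star (c k) * d k := by simpa [hv1, hv2] using hentry 1 2
  have h22 : ψ (star b * b) = ∑ k, star (d k) * d k := by simpa [hv2] using hentry 2 2
  have hsstar : star (ψ (star a)) = ψ a := by
    rw [h01, h10, star_sum]
    simp [star_mul]
  have htstar : star (ψ b) = ψ (star b) := by
    rw [h02, h20, star_sum]
    simp [star_mul]
  -- positivity facts about g := ψ 1
  have hg0 : (0:B) ≤ ψ 1 := by
    rw [h00]; exact Finset.sum_nonneg fun k _ => star_mul_self_nonneg _
  have honeB : (0:B) ≤ 1 := by simpa using star_mul_self_nonneg (1:B)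
  have h1A : ‖(1:A)‖ ≤ 1 := by
    have := CStarRing.norm_star_mul_self (x := (1:A))
    simp only [star_one, one_mul] at this
    nlinarith [norm_nonneg (1:A)]
  have hgnorm : ‖ψ (1:A)‖ ≤ 1 := by
    have := ψ.le_opNorm 1
    nlinarith [norm_nonneg ψ, norm_nonneg (1:A)]
  have hone : (0:B) ≤ 1 - ψ 1 := by
    have hle : ψ 1 ≤ algebraMap ℝ B ‖ψ (1:A)‖ :=
      IsSelfAdjoint.le_algebraMap_norm_self (IsSelfAdjoint.of_nonneg hg0)
    have h2 : algebraMap ℝ B ‖ψ (1:A)‖ ≤ 1 := by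
      have e : (1:B) - algebraMap ℝ B ‖ψ (1:A)‖ = algebraMap ℝ B (1 - ‖ψ (1:A)‖) := by
        rw [map_sub, map_one (algebraMap ℝ B)]
      have hp : (0:B) ≤ 1 - algebraMap ℝ B ‖ψ (1:A)‖ := by
        rw [e, IsScalarTower.algebraMap_apply ℝ ℂ B, Algebra.algebraMap_eq_smul_one,
          Complex.coe_algebraMap]
        exact csmul_nonneg (by linarith) honeB
      exact sub_nonneg.mp hp
    exact sub_nonneg.mpr (hle.trans h2)
  -- the square root of 1 - ψ 1
  set r : B := CFC.sqrt (1 - ψ 1) with hr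
  have hr2 : r * r = 1 - ψ 1 := CFC.sqrt_mul_sqrt_self _ hone
  have hrsa : IsSelfAdjoint r := IsSelfAdjoint.of_nonneg (CFC.sqrt_nonneg _)
  -- the vectors
  set x : Option (Fin 3) → B :=
    fun o => o.elim (r * ψ (star a)) (fun k => c k - u k * ψ (star a)) with hx
  set y : Option (Fin 3) → B :=
    fun o => o.elim (r * ψ b) (fun k => d k - u k * ψ b) with hy
  have hnone : ∀ w1 w2 : B, star (r * w1) * (r * w2) = star w1 * (1 - ψ 1) * w2 := by
    intro w1 w2
    rw [star_mul, hrsa.star_eq, mul_assoc, ← mul_assoc r r w2, hr2, ← mul_assoc]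
  have hxy : ∑ o, star (x o) * y o = ψ (a * b) - ψ a * ψ b := by
    rw [Fintype.sum_option]
    simp only [hx, hy, Option.elim]
    rw [expand_aux, hnone, ← h12, ← h10, ← h02, ← h00, hsstar]
    noncomm_ring
  have hxx : ∑ o, star (x o) * x o = ψ (a * star a) - ψ a * ψ (star a) := by
    rw [Fintype.sum_option]
    simp only [hx, Option.elim]
    rw [expand_aux, hnone, ← h11, ← h10, ← h01, ← h00, hsstar]
    noncomm_ring
  have hyy : ∑ o, star (y o) * y o = ψ (star b * b) - ψ (star b) * ψ b := by
    rw [Fintype.sum_option]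
    simp only [hy, Option.elim]
    rw [expand_aux, hnone, ← h22, ← h20, ← h02, ← h00, htstar]
    noncomm_ring
  -- bound on the q-part
  have hqnn : (0:B) ≤ ψ (star b * b) - ψ (star b) * ψ b := by
    rw [← hyy]
    exact Finset.sum_nonneg fun k _ => star_mul_self_nonneg _
  have hqle : ψ (star b * b) - ψ (star b) * ψ b ≤ ψ (star b * b) := by
    have : (0:B) ≤ ψ (star b) * ψ b := by
      rw [← htstar]
      exact star_mul_self_nonneg _
    calc ψ (star b * b) - ψ (star b) * ψ b ≤ ψ (star b * b) - 0 := by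
          exact sub_le_sub_left this _
      _ = ψ (star b * b) := sub_zero _
  have hqnorm : ‖ψ (star b * b) - ψ (star b) * ψ b‖ ≤ ‖b‖ ^ 2 := by
    have h1 : ‖ψ (star b * b) - ψ (star b) * ψ b‖ ≤ ‖ψ (star b * b)‖ :=
      CStarAlgebra.norm_le_norm_of_nonneg_of_le hqnn hqle
    have h2 : ‖ψ (star b * b)‖ ≤ ‖b‖ ^ 2 := by
      have h3 := ψ.le_opNorm (star b * b)
      have h4 : ‖star b * b‖ = ‖b‖ * ‖b‖ := CStarRing.norm_star_mul_self
      nlinarith [norm_nonneg (star b * b), norm_nonneg ψ, norm_nonneg b]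
    linarith
  -- Cauchy–Schwarz
  have hcs := cs_aux x y
  rw [hxy, hxx, hyy] at hcs
  refine hcs.trans ?_
  have hsq : Real.sqrt ‖ψ (star b * b) - ψ (star b) * ψ b‖ ≤ ‖b‖ := by
    calc Real.sqrt ‖ψ (star b * b) - ψ (star b) * ψ b‖
        ≤ Real.sqrt (‖b‖ ^ 2) := Real.sqrt_le_sqrt hqnorm
      _ = ‖b‖ := Real.sqrt_sq (norm_nonneg b)
  exact mul_le_mul_of_nonneg_left hsq (Real.sqrt_nonneg _)
end
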